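/- arXiv:2001.06852 — 2 statements merged into one kernel-verified Lean document; each statement's English description precedes it below -/
import Mathlib

section
/- Let W : Ω̄ × ℝ^M → [0,∞) be continuous. Fix λ > 0, ε > 0, x ∈ Ω, and p,q ∈ ℝ^M, and let γ ∈ 𝒜(p,q) be of class C¹ with γ′(s) ≠ 0 for all s ∈ (−1,1). Then there exist τ > 0 with τ ≤ (ε/√λ)·L(γ) and g ∈ C¹((0,τ); [−1,1]) such that (g′(t))² = (λ + W(x, γ(g(t)))) / (ε²|γ′(g(t))|²) for all t ∈ (0,τ), g(0) = −1, g(τ) = 1, and ∫_0^τ [ε^{−1}·W(x, γ(g(t))) + ε·|γ′(g(t))|²·(g′(t))²] dt ≤ ∫_{−1}^1 2√(W(x,γ(s)))·|γ′(s)| ds + 2√λ·∫_{−1}^1 |γ′(s)| ds. -/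
open MeasureTheory Set Filter Topology Metric
open scoped ENNReal NNReal RealInnerProductSpace ContDiff MeasureTheory

noncomputable section

namespace ModicaMortola

variable {N M k : ℕ}

/-- `ℝ^N` as a Euclidean space (the physical domain). -/
abbrev Dom (N : ℕ) := EuclideanSpace ℝ (Fin N)

/-- `ℝ^M` as a Euclidean space (the target of the phase variable). -/
abbrev Tgt (M : ℕ) := EuclideanSpace ℝ (Fin M)

/-- `Ω` has Lipschitz continuous boundary: near every boundary point, in suitable
orthonormal coordinates, `Ω` coincides with the open region above the graph of a
Lipschitz function. -/
def HasLipschitzBoundary (Ω : Set (Dom N)) : Prop :=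
  ∀ x ∈ frontier Ω, ∃ (ρ : ℝ) (ν : Dom N) (f : Dom N → ℝ) (L : ℝ≥0),
    0 < ρ ∧ ‖ν‖ = 1 ∧ LipschitzWith L f ∧
    Ω ∩ ball x ρ = { y ∈ ball x ρ | f (y - ⟪y, ν⟫ • ν) < ⟪y, ν⟫ }

/-! ### Admissible curves and degenerate geodesic distances -/

/-- `(γ, g)` represents a curve in the admissible class `𝒜(p,q)`:
`γ ∈ W^{1,1}((-1,1);ℝ^M)`, identified with its absolutely continuous representative
(with a.e. derivative `g`), with `γ(-1) = p` and `γ(1) = q`. -/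
def IsAdmissible (p q : Tgt M) (γ g : ℝ → Tgt M) : Prop :=
  IntegrableOn g (Ioo (-1 : ℝ) 1) volume ∧
  (∀ t ∈ Icc (-1 : ℝ) 1, γ t = p + ∫ s in Ioc (-1 : ℝ) t, g s) ∧
  γ (-1) = p ∧ γ 1 = q

/-- Euclidean length `L(γ) = ∫_{-1}^1 |γ'(t)| dt` of an admissible curve. -/
def clen (g : ℝ → Tgt M) : ℝ := ∫ t in Ioo (-1 : ℝ) 1, ‖g t‖

/-- The length `∫_{-1}^1 F(γ(t)) |γ'(t)| dt` weighted by a conformal factor `F`. -/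
def wlen (F : Tgt M → ℝ) (γ g : ℝ → Tgt M) : ℝ :=
  ∫ t in Ioo (-1 : ℝ) 1, F (γ t) * ‖g t‖

/-- The (possibly degenerate) geodesic distance `d_F(p,q)`. -/
def dF (F : Tgt M → ℝ) (p q : Tgt M) : ℝ :=
  sInf { r | ∃ γ g, IsAdmissible p q γ g ∧ r = wlen F γ g }

/-- The geodesic distance `d_W(x,p,q)` induced by the conformal factor `2√(W(x,·))`. -/
def dW (W : Dom N → Tgt M → ℝ) (x : Dom N) (p q : Tgt M) : ℝ :=
  dF (fun z => 2 * Real.sqrt (W x z)) p q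

/-! ### The hypotheses (H1)–(H4) on the potential -/

/-- Hypothesis (H1): `W ≥ 0` is Lipschitz on every compact subset of `Ω̄ × ℝ^M` and,
for every `x ∈ Ω̄`, `W(x,p) = 0` iff `p ∈ {z_1(x),…,z_k(x)}`, with `z_i` Lipschitz on `Ω̄`. -/
def HypH1 (Ω : Set (Dom N)) (W : Dom N → Tgt M → ℝ) (z : Fin k → Dom N → Tgt M) : Prop :=
  (∀ x ∈ closure Ω, ∀ p, 0 ≤ W x p) ∧
  (∀ K : Set (Dom N × Tgt M), IsCompact K → K ⊆ (closure Ω) ×ˢ (univ : Set (Tgt M)) →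
    ∃ L : ℝ≥0, LipschitzOnWith L (fun q : Dom N × Tgt M => W q.1 q.2) K) ∧
  (∀ x ∈ closure Ω, ∀ p, W x p = 0 ↔ ∃ i, p = z i x) ∧
  (∀ i, ∃ L : ℝ≥0, LipschitzOnWith L (z i) (closure Ω))

/-- Hypothesis (H2): the wells are uniformly separated by `δ > 0`. -/
def HypH2 (Ω : Set (Dom N)) (z : Fin k → Dom N → Tgt M) (δ : ℝ) : Prop :=
  0 < δ ∧ ∀ x ∈ closure Ω, ∀ i j : Fin k, i ≠ j → δ ≤ ‖z i x - z j x‖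

/-- Hypothesis (H3): `W(x,p) = α_i |p - z_i(x)|²` for `p ∈ B(z_i(x), r)`. -/
def HypH3 (Ω : Set (Dom N)) (W : Dom N → Tgt M → ℝ) (z : Fin k → Dom N → Tgt M)
    (r : ℝ) (α : Fin k → ℝ) : Prop :=
  0 < r ∧ (∀ i, 0 < α i) ∧
    ∀ x ∈ Ω, ∀ (i : Fin k) (p : Tgt M), ‖p - z i x‖ < r → W x p = α i * ‖p - z i x‖ ^ 2

/-- Hypothesis (H4): `W(x,p) ≥ S|p|` for `|p| > R`. -/
def HypH4 (Ω : Set (Dom N)) (W : Dom N → Tgt M → ℝ) (R S : ℝ) : Prop :=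
  0 < R ∧ 0 < S ∧ ∀ x ∈ Ω, ∀ p : Tgt M, R < ‖p‖ → S * ‖p‖ ≤ W x p

/-- Hypothesis (H4′): `W(x,p) ≥ η > 0` whenever `p` lies outside all balls `B(z_i(x), r/2)`. -/
def HypH4' (Ω : Set (Dom N)) (W : Dom N → Tgt M → ℝ) (z : Fin k → Dom N → Tgt M)
    (r η : ℝ) : Prop :=
  0 < η ∧ ∀ x ∈ Ω, ∀ p : Tgt M, (∀ i : Fin k, r / 2 ≤ ‖p - z i x‖) → η ≤ W x p

/-! ### Sobolev functions and the Modica–Mortola functionals -/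

/-- `Du` is a weak (distributional) gradient of `u` on the open set `Ω`. -/
def IsWeakGradOn {G : Type*} [NormedAddCommGroup G] [NormedSpace ℝ G]
    (Ω : Set (Dom N)) (u : Dom N → G) (Du : Dom N → Dom N →L[ℝ] G) : Prop :=
  ∀ φ : Dom N → ℝ, ContDiff ℝ ∞ φ → HasCompactSupport φ → tsupport φ ⊆ Ω →
    ∀ v : Dom N, ∫ x in Ω, fderiv ℝ φ x v • u x = - ∫ x in Ω, φ x • Du x v

/-- `u ∈ H¹(Ω;ℝ^M)` with weak gradient `Du`. -/
def MemH1 (Ω : Set (Dom N)) (u : Dom N → Tgt M) (Du : Dom N → Dom N →L[ℝ] Tgt M) : Prop :=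
  MemLp u 2 (volume.restrict Ω) ∧ MemLp Du 2 (volume.restrict Ω) ∧ IsWeakGradOn Ω u Du

/-- The squared Frobenius norm `|∇u(x)|²` of the gradient. -/
def gradSq (Du : Dom N → Dom N →L[ℝ] Tgt M) (x : Dom N) : ℝ :=
  ∑ i : Fin N, ‖Du x (EuclideanSpace.single i 1)‖ ^ 2

/-- The energy `∫_Ω [ε⁻¹ W(x,u) + ε |∇u|²] dx` computed with a given weak gradient. -/
def energyOf (Ω : Set (Dom N)) (W : Dom N → Tgt M → ℝ) (ε : ℝ)
    (u : Dom N → Tgt M) (Du : Dom N → Dom N →L[ℝ] Tgt M) : ℝ≥0∞ :=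
  ∫⁻ x in Ω, ENNReal.ofReal (ε⁻¹ * W x (u x) + ε * gradSq Du x)

/-- The Modica–Mortola functional `F_ε : L¹(Ω;ℝ^M) → [0,∞]`, equal to `+∞` off `H¹(Ω;ℝ^M)`. -/
def Feps (Ω : Set (Dom N)) (W : Dom N → Tgt M → ℝ) (ε : ℝ) (u : Dom N → Tgt M) : ℝ≥0∞ :=
  sInf { e | ∃ Du, MemH1 Ω u Du ∧ e = energyOf Ω W ε u Du }

/-- Convergence `u_n → v` in `L¹(Ω;ℝ^M)`. -/
def TendstoL1 (Ω : Set (Dom N)) (u : ℕ → Dom N → Tgt M) (v : Dom N → Tgt M) : Prop :=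
  Tendsto (fun n => ∫ x in Ω, ‖u n x - v x‖) atTop (𝓝 0)

/-- The `L¹(Ω;ℝ^M)` distance. -/
def L1dist (Ω : Set (Dom N)) (u v : Dom N → Tgt M) : ℝ :=
  ∫ x in Ω, ‖u x - v x‖

/-! ### BV functions, jump sets and the sharp interface functional -/

/-- Scalar total variation of `f` on `Ω`, defined by duality with `C^∞_c` vector fields. -/
def totalVarScalar (Ω : Set (Dom N)) (f : Dom N → ℝ) : ℝ≥0∞ :=
  ⨆ φ ∈ {φ : Fin N → Dom N → ℝ |
      (∀ i, ContDiff ℝ ∞ (φ i) ∧ HasCompactSupport (φ i) ∧ tsupport (φ i) ⊆ Ω) ∧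
      ∀ x, ∑ i : Fin N, (φ i x) ^ 2 ≤ 1},
    ENNReal.ofReal (∫ x in Ω, f x * ∑ i : Fin N, fderiv ℝ (φ i) x (EuclideanSpace.single i 1))

/-- Total variation `|Du|(Ω)` of a vector-valued `u`, defined by duality. -/
def totalVar (Ω : Set (Dom N)) (u : Dom N → Tgt M) : ℝ≥0∞ :=
  ⨆ φ ∈ {φ : Fin M → Fin N → Dom N → ℝ |
      (∀ j i, ContDiff ℝ ∞ (φ j i) ∧ HasCompactSupport (φ j i) ∧ tsupport (φ j i) ⊆ Ω) ∧
      ∀ x, ∑ j : Fin M, ∑ i : Fin N, (φ j i x) ^ 2 ≤ 1},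
    ENNReal.ofReal (∫ x in Ω,
      ∑ j : Fin M, u x j * ∑ i : Fin N, fderiv ℝ (φ j i) x (EuclideanSpace.single i 1))

/-- `u ∈ BV(Ω;ℝ^M)`. -/
def MemBV (Ω : Set (Dom N)) (u : Dom N → Tgt M) : Prop :=
  IntegrableOn u Ω volume ∧ totalVar Ω u < ⊤

/-- `u ∈ BV(Ω; z_1, …, z_k)`: `u` is of bounded variation and takes values in the wells a.e. -/
def MemBVwells (Ω : Set (Dom N)) (z : Fin k → Dom N → Tgt M) (u : Dom N → Tgt M) : Prop :=
  MemBV Ω u ∧ ∀ᵐ x ∂(volume.restrict Ω), ∃ i, u x = z i x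

/-- `x` is an approximate jump point of `u` with one-sided traces `a, b` and normal `ν`. -/
def JumpAt (u : Dom N → Tgt M) (x : Dom N) (a b : Tgt M) (ν : Dom N) : Prop :=
  a ≠ b ∧ ‖ν‖ = 1 ∧
  Tendsto (fun ρ : ℝ =>
      (ρ ^ N)⁻¹ * ∫ y in {y ∈ ball x ρ | 0 ≤ ⟪y - x, ν⟫}, ‖u y - a‖)
    (𝓝[>] 0) (𝓝 0) ∧
  Tendsto (fun ρ : ℝ =>
      (ρ ^ N)⁻¹ * ∫ y in {y ∈ ball x ρ | ⟪y - x, ν⟫ ≤ 0}, ‖u y - b‖)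
    (𝓝[>] 0) (𝓝 0)

/-- The approximate jump set `J_u`. -/
def jumpSet (u : Dom N → Tgt M) : Set (Dom N) :=
  { x | ∃ a b ν, JumpAt u x a b ν }

open Classical in
/-- The pair of one-sided traces `(u⁺(x), u⁻(x))` at a jump point (an arbitrary admissible
choice; it is unique up to a swap). -/
def jumpVals (u : Dom N → Tgt M) (x : Dom N) : Tgt M × Tgt M :=
  if h : ∃ q : Tgt M × Tgt M × Dom N, JumpAt u x q.1 q.2.1 q.2.2
  then (h.choose.1, h.choose.2.1) else (0, 0)

/-- The interfacial energy `∫_{J_u ∩ Ω} d_W(x, u⁺(x), u⁻(x)) dH^{N-1}(x)`. -/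
def jumpEnergy (Ω : Set (Dom N)) (W : Dom N → Tgt M → ℝ) (u : Dom N → Tgt M) : ℝ≥0∞ :=
  ∫⁻ x in Ω ∩ jumpSet u,
    ENNReal.ofReal (dW W x (jumpVals u x).1 (jumpVals u x).2) ∂(μH[(N : ℝ) - 1])

open Classical in
/-- The sharp interface functional `F_0 : L¹(Ω;ℝ^M) → [0,∞]`. -/
def F0 (Ω : Set (Dom N)) (W : Dom N → Tgt M → ℝ) (z : Fin k → Dom N → Tgt M)
    (u : Dom N → Tgt M) : ℝ≥0∞ :=
  if MemBVwells Ω z u then jumpEnergy Ω W u else ⊤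

open Classical in
/-- The relaxed sharp interface functional `F̃_0`, finite on all functions taking values in
the wells a.e. with finite interfacial energy (no BV requirement). -/
def F0tilde (Ω : Set (Dom N)) (W : Dom N → Tgt M → ℝ) (z : Fin k → Dom N → Tgt M)
    (u : Dom N → Tgt M) : ℝ≥0∞ :=
  if ∀ᵐ x ∂(volume.restrict Ω), ∃ i, u x = z i x then jumpEnergy Ω W u else ⊤

/-! ### Mass constraint, traces, partitions -/

open Classical in
/-- The mass-constrained functional `F_ε^𝓜`. -/
def FepsM (Ω : Set (Dom N)) (W : Dom N → Tgt M → ℝ) (ε : ℝ) (𝓜 : Tgt M)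
    (u : Dom N → Tgt M) : ℝ≥0∞ :=
  if IntegrableOn u Ω volume ∧ (∫ x in Ω, u x) = 𝓜 then Feps Ω W ε u else ⊤

open Classical in
/-- The mass-constrained sharp interface functional `F_0^𝓜`. -/
def F0M (Ω : Set (Dom N)) (W : Dom N → Tgt M → ℝ) (z : Fin k → Dom N → Tgt M)
    (𝓜 : Tgt M) (u : Dom N → Tgt M) : ℝ≥0∞ :=
  if IntegrableOn u Ω volume ∧ (∫ x in Ω, u x) = 𝓜 then F0 Ω W z u else ⊤

/-- `u` has boundary value `a` at the boundary point `x` (Lebesgue point characterization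
of the trace). -/
def HasTraceAt (Ω : Set (Dom N)) (u : Dom N → Tgt M) (x : Dom N) (a : Tgt M) : Prop :=
  Tendsto (fun ρ : ℝ => (ρ ^ N)⁻¹ * ∫ y in Ω ∩ ball x ρ, ‖u y - a‖) (𝓝[>] 0) (𝓝 0)

/-- `Tr u = g` on `∂Ω`, up to an `H^{N-1}`-negligible set. -/
def IsTrace (Ω : Set (Dom N)) (u : Dom N → Tgt M) (g : Dom N → Tgt M) : Prop :=
  ∀ᵐ x ∂((μH[(N : ℝ) - 1]).restrict (frontier Ω)), HasTraceAt Ω u x (g x)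

open Classical in
/-- The trace function `Tr u` on `∂Ω` (an arbitrary admissible choice of boundary values). -/
def traceFun (Ω : Set (Dom N)) (u : Dom N → Tgt M) (x : Dom N) : Tgt M :=
  if h : ∃ a, HasTraceAt Ω u x a then h.choose else 0

open Classical in
/-- The Dirichlet functional `F_ε^D`. -/
def FepsD (Ω : Set (Dom N)) (W : Dom N → Tgt M → ℝ) (ε : ℝ) (g : Dom N → Tgt M)
    (u : Dom N → Tgt M) : ℝ≥0∞ :=
  if IsTrace Ω u g then Feps Ω W ε u else ⊤

/-- The Dirichlet sharp interface functional
`F_0^D(u) = F_0(u) + ∫_{∂Ω} d_W(x, Tr u(x), g(x)) dH^{N-1}(x)`. -/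
def F0D (Ω : Set (Dom N)) (W : Dom N → Tgt M → ℝ) (z : Fin k → Dom N → Tgt M)
    (g : Dom N → Tgt M) (u : Dom N → Tgt M) : ℝ≥0∞ :=
  F0 Ω W z u +
    ∫⁻ x in frontier Ω, ENNReal.ofReal (dW W x (traceFun Ω u x) (g x)) ∂(μH[(N : ℝ) - 1])

/-- `E` has finite perimeter in `Ω`. -/
def HasFinitePerimeterIn (Ω E : Set (Dom N)) : Prop :=
  totalVarScalar Ω (E.indicator fun _ => (1 : ℝ)) < ⊤

/-- `{P i}` is a Caccioppoli partition of `Ω`. -/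
def CaccioppoliPartition (Ω : Set (Dom N)) (P : Fin k → Set (Dom N)) : Prop :=
  (∀ i, P i ⊆ Ω) ∧ (∀ i j, i ≠ j → Disjoint (P i) (P j)) ∧ (⋃ i, P i) = Ω ∧
    ∀ i, HasFinitePerimeterIn Ω (P i)

/-- `E` is a polyhedral set in `Ω`: `∂E ∩ Ω` is contained in finitely many hyperplanes. -/
def IsPolyhedralIn (Ω E : Set (Dom N)) : Prop :=
  ∃ (m : ℕ) (v : Fin m → Dom N) (c : Fin m → ℝ),
    (∀ j, v j ≠ 0) ∧ frontier E ∩ Ω ⊆ ⋃ j, { x | ⟪x, v j⟫ = c j }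

/-- The function `u = Σ_i z_i 1_{P i}` associated with a partition. -/
def partitionFun (z : Fin k → Dom N → Tgt M) (P : Fin k → Set (Dom N)) (x : Dom N) : Tgt M :=
  ∑ i, (P i).indicator (fun y => z i y) x

/-- The point `x` has density `t` for the set `E`. -/
def densityAt (E : Set (Dom N)) (x : Dom N) (t : ℝ≥0∞) : Prop :=
  Tendsto (fun ρ : ℝ => volume (E ∩ ball x ρ) / volume (ball x ρ)) (𝓝[>] 0) (𝓝 t)

/-- The essential boundary `∂*E`. -/
def essBoundary (E : Set (Dom N)) : Set (Dom N) :=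
  { x | ¬ densityAt E x 0 ∧ ¬ densityAt E x 1 }

/-! ### Conformal factors induced by a region `𝓡` -/

/-- `F(z) = min { 2√(W(x,z)) : x ∈ 𝓡 }`. -/
def confFactor (W : Dom N → Tgt M → ℝ) (𝓡 : Set (Dom N)) (p : Tgt M) : ℝ :=
  sInf ((fun x => 2 * Real.sqrt (W x p)) '' 𝓡)

/-- The constant `σ` of Proposition 3.2. -/
def sigmaConst (r δ η : ℝ) (α : Fin k → ℝ) : ℝ :=
  (1 / 2) * min (min r δ) (min ((⨅ i, α i) / (⨆ i, α i) * δ) (Real.sqrt (η / (⨆ i, α i))))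

/-- `Σ_σ(𝓡) = min { F(z) : z ∉ ∪_i 𝒩_{σ/2}(z_i(𝓡)) }`. -/
def SigmaLB (W : Dom N → Tgt M → ℝ) (z : Fin k → Dom N → Tgt M) (𝓡 : Set (Dom N))
    (σ : ℝ) : ℝ :=
  sInf ((confFactor W 𝓡) '' { p : Tgt M | p ∉ ⋃ i, cthickening (σ / 2) (z i '' 𝓡) })

end ModicaMortola

open ModicaMortola

/-! Modica's reparametrization runs along `γ` at the speed that balances the two terms of the
energy. With `Ψ(t) = ∫_{-1}^t ε|γ'| / √(λ + W(x,γ))` and `g = Ψ⁻¹`, one has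
`ε² |γ'(g)|² g'² = λ + W(x,γ(g))`, so the energy density is `ε⁻¹ (λ + 2 W(x,γ(g)))`.
Substituting `s = g t` turns the energy into `∫ |γ'| (λ + 2W) / √(λ + W) ≤ ∫ 2 |γ'| √(λ + W)`,
and `√(λ + W) ≤ √λ + √W`. Since `W ≥ 0`, also `τ = Ψ(1) ≤ ε L(γ) / √λ`. -/
theorem Real.sqrt_add_le_add_sqrt (x y : ℝ) : √(x + y) ≤ √x + √y :=
  Real.sqrt_le_iff.2 ⟨by positivity, by
    nlinarith [Real.sq_sqrt' (x := x), Real.sq_sqrt' (x := y), le_max_left x 0, le_max_left y 0,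
      mul_nonneg (Real.sqrt_nonneg x) (Real.sqrt_nonneg y)]⟩

theorem intervalIntegral.integral_eq_integral_Ioo {E : Type*} [NormedAddCommGroup E]
    [NormedSpace ℝ E] {f : ℝ → E} {a b : ℝ} (hab : a ≤ b) :
    ∫ x in a..b, f x = ∫ x in Ioo a b, f x := by
  rw [intervalIntegral.integral_of_le hab, integral_Ioc_eq_integral_Ioo]

theorem StrictMonoOn.exists_continuous_invOn_Icc {α β : Type*}
    [ConditionallyCompleteLinearOrder α] [TopologicalSpace α] [OrderTopology α] [DenselyOrdered α]
    [LinearOrder β] [TopologicalSpace β] [OrderTopology β] {f : α → β} {a b : α} (hab : a ≤ b)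
    (hf : StrictMonoOn f (Icc a b)) (hfc : ContinuousOn f (Icc a b)) :
    ∃ g : β → α, Continuous g ∧ MapsTo g (Icc (f a) (f b)) (Icc a b) ∧
      InvOn g f (Icc a b) (Icc (f a) (f b)) := by
  have hfab : f a ≤ f b := hf.monotoneOn (left_mem_Icc.2 hab) (right_mem_Icc.2 hab) hab
  let e : Icc a b ≃o Icc (f a) (f b) := (StrictMonoOn.orderIso f _ hf).trans
    (OrderIso.setCongr _ _ (hfc.image_Icc_of_monotoneOn hab hf.monotoneOn))
  have he : ∀ s : Icc a b, (e s : β) = f s := fun _ => rfl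
  refine ⟨fun t => e.symm (projIcc (f a) (f b) hfab t),
    continuous_subtype_val.comp (e.symm.continuous.comp continuous_projIcc),
    fun t _ => (e.symm _).2, fun s hs => ?_, fun t ht => ?_⟩
  · have : projIcc (f a) (f b) hfab (f s) = e ⟨s, hs⟩ := projIcc_val hfab (e ⟨s, hs⟩)
    simp [this]
  · simp [← he, projIcc_of_mem _ ht]

theorem strictMonoOn_integral_of_pos {φ : ℝ → ℝ} {a b : ℝ} (hφ : Continuous φ)
    (hpos : ∀ s ∈ Ioo a b, 0 < φ s) : StrictMonoOn (fun t => ∫ s in a..t, φ s) (Icc a b) := by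
  refine strictMonoOn_of_deriv_pos (convex_Icc a b)
    (fun t _ => (hφ.integral_hasStrictDerivAt a t).hasDerivAt.continuousAt.continuousWithinAt)
    fun t ht => ?_
  rw [interior_Icc] at ht
  rw [hφ.deriv_integral]
  exact hpos t ht

theorem exists_inverse_integral_of_pos {φ : ℝ → ℝ} {a b : ℝ} (hab : a ≤ b) (hφ : Continuous φ)
    (hpos : ∀ s ∈ Ioo a b, 0 < φ s) :
    ∃ g : ℝ → ℝ, Continuous g ∧ g 0 = a ∧ g (∫ s in a..b, φ s) = b ∧
      MapsTo g (Icc 0 (∫ s in a..b, φ s)) (Icc a b) ∧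
      (∀ t ∈ Ioo 0 (∫ s in a..b, φ s), g t ∈ Ioo a b ∧ HasDerivAt g (φ (g t))⁻¹ t) ∧
      ∀ F : ℝ → ℝ, Continuous F →
        ∫ t in 0..(∫ s in a..b, φ s), F (g t) = ∫ s in a..b, F s * φ s := by
  set Ψ : ℝ → ℝ := fun t => ∫ s in a..t, φ s
  have hΨ : ∀ t, HasDerivAt Ψ (φ t) t := fun t => (hφ.integral_hasStrictDerivAt a t).hasDerivAt
  have hΨa : Ψ a = 0 := intervalIntegral.integral_same
  obtain ⟨g, hg, hmaps, hleft, hright⟩ : ∃ g : ℝ → ℝ, Continuous g ∧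
      MapsTo g (Icc (Ψ a) (Ψ b)) (Icc a b) ∧ InvOn g Ψ (Icc a b) (Icc (Ψ a) (Ψ b)) :=
    (strictMonoOn_integral_of_pos hφ hpos).exists_continuous_invOn_Icc hab
      fun t _ => (hΨ t).continuousAt.continuousWithinAt
  rw [hΨa] at hmaps hright
  have hga : g 0 = a := hΨa ▸ hleft (left_mem_Icc.2 hab)
  have hgb : g (Ψ b) = b := hleft (right_mem_Icc.2 hab)
  have hgIoo : ∀ t ∈ Ioo 0 (Ψ b), g t ∈ Ioo a b := by
    intro t ht
    have hΨg : Ψ (g t) = t := hright (Ioo_subset_Icc_self ht)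
    obtain ⟨h1, h2⟩ := hmaps (Ioo_subset_Icc_self ht)
    refine ⟨h1.lt_of_ne ?_, h2.lt_of_ne ?_⟩ <;> rintro h
    · rw [← h, hΨa] at hΨg; exact ht.1.ne hΨg
    · rw [h] at hΨg; exact ht.2.ne' hΨg
  refine ⟨g, hg, hga, hgb, hmaps, fun t ht => ⟨hgIoo t ht, ?_⟩, fun F hF => ?_⟩
  · exact (hΨ (g t)).of_local_left_inverse hg.continuousAt (hpos _ (hgIoo t ht)).ne'
      (eventually_of_mem (Ioo_mem_nhds ht.1 ht.2) fun y hy => hright (Ioo_subset_Icc_self hy))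
  · change ∫ t in (0 : ℝ)..Ψ b, (F ∘ g) t = _
    rw [← hΨa, ← intervalIntegral.integral_comp_mul_deriv (fun s _ => hΨ s) hφ.continuousOn
      (hF.comp hg)]
    refine intervalIntegral.integral_congr fun s hs => ?_
    rw [uIcc_of_le hab] at hs
    simp only [Function.comp_apply, hleft hs]

/-- `reparamSpeed ε λ |γ'(s)| (W(x, γ(s)))` is `Ψ'(s)`. -/
def reparamSpeed (ε lam c v : ℝ) : ℝ := ε * c / √(lam + v)

section reparamSpeed

variable {ε lam c v : ℝ}

theorem reparamSpeed_pos (hε : 0 < ε) (hc : 0 < c) (hlv : 0 < lam + v) :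
    0 < reparamSpeed ε lam c v :=
  div_pos (mul_pos hε hc) (Real.sqrt_pos.2 hlv)

theorem inv_reparamSpeed_sq (hlv : 0 ≤ lam + v) :
    (reparamSpeed ε lam c v)⁻¹ ^ 2 = (lam + v) / (ε ^ 2 * c ^ 2) := by
  rw [reparamSpeed, inv_div, div_pow, Real.sq_sqrt hlv, mul_pow]

theorem reparamSpeed_le (hlam : 0 < lam) (hε : 0 ≤ ε) (hc : 0 ≤ c) (hv : 0 ≤ v) :
    reparamSpeed ε lam c v ≤ ε / √lam * c := by
  rw [reparamSpeed, div_mul_eq_mul_div]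
  exact div_le_div_of_nonneg_left (by positivity) (Real.sqrt_pos.2 hlam)
    (Real.sqrt_le_sqrt (by linarith))

theorem reparamSpeed_mul_le (hlam : 0 < lam) (hε : 0 < ε) (hc : 0 ≤ c) (hv : 0 ≤ v) :
    ε⁻¹ * (lam + 2 * v) * reparamSpeed ε lam c v ≤ 2 * √v * c + 2 * √lam * c := by
  have hr : 0 < √(lam + v) := Real.sqrt_pos.2 (by linarith)
  have hr2 : √(lam + v) ^ 2 = lam + v := Real.sq_sqrt (by linarith)
  calc ε⁻¹ * (lam + 2 * v) * reparamSpeed ε lam c v = c * (lam + 2 * v) / √(lam + v) := by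
        rw [reparamSpeed]; field_simp
    _ ≤ c * (2 * √(lam + v) ^ 2) / √(lam + v) := by gcongr; linarith
    _ = 2 * c * √(lam + v) := by field_simp
    _ ≤ 2 * c * (√lam + √v) := by gcongr; exact Real.sqrt_add_le_add_sqrt lam v
    _ = 2 * √v * c + 2 * √lam * c := by ring

end reparamSpeed

theorem exists_modica_reparametrization {c V : ℝ → ℝ} {a b lam ε : ℝ} (hab : a < b)
    (hc : Continuous c) (hc0 : ∀ s ∈ Ioo a b, 0 < c s) (hV : Continuous V) (hV0 : ∀ s, 0 ≤ V s)
    (hlam : 0 < lam) (hε : 0 < ε) :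
    ∃ (τ : ℝ) (g : ℝ → ℝ), 0 < τ ∧ τ ≤ ε / √lam * ∫ s in Ioo a b, c s ∧
      g 0 = a ∧ g τ = b ∧ (∀ t ∈ Icc 0 τ, g t ∈ Icc a b) ∧ ContinuousOn g (Icc 0 τ) ∧
      (∀ t ∈ Ioo 0 τ, DifferentiableAt ℝ g t ∧
        (deriv g t) ^ 2 = (lam + V (g t)) / (ε ^ 2 * c (g t) ^ 2)) ∧
      (∫ t in Ioo 0 τ, (ε⁻¹ * V (g t) + ε * c (g t) ^ 2 * (deriv g t) ^ 2)) ≤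
        (∫ s in Ioo a b, 2 * √(V s) * c s) + 2 * √lam * ∫ s in Ioo a b, c s := by
  have hlamV : ∀ s, 0 < lam + V s := fun s => add_pos_of_pos_of_nonneg hlam (hV0 s)
  set φ : ℝ → ℝ := fun s => reparamSpeed ε lam (c s) (V s)
  have hφ : Continuous φ := (continuous_const.mul hc).div (continuous_const.add hV).sqrt
    fun s => (Real.sqrt_pos.2 (hlamV s)).ne'
  have hφpos : ∀ s ∈ Ioo a b, 0 < φ s := fun s hs => reparamSpeed_pos hε (hc0 s hs) (hlamV s)
  obtain ⟨g, hg, hga, hgb, hmaps, hderiv, hsubst⟩ :=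
    exists_inverse_integral_of_pos hab.le hφ hφpos
  set τ := ∫ s in a..b, φ s
  have hτ : 0 < τ := intervalIntegral.intervalIntegral_pos_of_pos_on
    (hφ.intervalIntegrable _ _) hφpos hab
  have hint : ∀ {f : ℝ → ℝ}, Continuous f → IntegrableOn f (Ioo a b) := fun hf =>
    hf.integrableOn_Icc.mono_set Ioo_subset_Icc_self
  have hderiv_sq : ∀ t ∈ Ioo 0 τ, deriv g t ^ 2 = (lam + V (g t)) / (ε ^ 2 * c (g t) ^ 2) :=
    fun t ht => by rw [(hderiv t ht).2.deriv, inv_reparamSpeed_sq (hlamV _).le]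
  refine ⟨τ, g, hτ, ?_, hga, hgb, hmaps, hg.continuousOn,
    fun t ht => ⟨(hderiv t ht).2.differentiableAt, hderiv_sq t ht⟩, ?_⟩
  · rw [show τ = ∫ s in Ioo a b, φ s from intervalIntegral.integral_eq_integral_Ioo hab.le,
      ← integral_const_mul]
    exact setIntegral_mono_on (hint hφ) (hint (continuous_const.mul hc)) measurableSet_Ioo
      fun s hs => reparamSpeed_le hlam hε.le (hc0 s hs).le (hV0 s)
  calc ∫ t in Ioo 0 τ, (ε⁻¹ * V (g t) + ε * c (g t) ^ 2 * (deriv g t) ^ 2)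
      = ∫ t in Ioo 0 τ, ε⁻¹ * (lam + 2 * V (g t)) := by
        refine setIntegral_congr_fun measurableSet_Ioo fun t ht => ?_
        have hcg : c (g t) ≠ 0 := (hc0 _ (hderiv t ht).1).ne'
        simp only [hderiv_sq t ht]
        field_simp
        ring
    _ = ∫ s in Ioo a b, ε⁻¹ * (lam + 2 * V s) * φ s := by
        rw [← intervalIntegral.integral_eq_integral_Ioo hτ.le,
          hsubst (fun s => ε⁻¹ * (lam + 2 * V s)) (by fun_prop),
          intervalIntegral.integral_eq_integral_Ioo hab.le]
    _ ≤ ∫ s in Ioo a b, (2 * √(V s) * c s + 2 * √lam * c s) :=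
        setIntegral_mono_on (hint (by fun_prop)) (hint (by fun_prop)) measurableSet_Ioo
          fun s hs => reparamSpeed_mul_le hlam hε (hc0 s hs).le (hV0 s)
    _ = _ := by
        rw [integral_add (hint (by fun_prop)) (hint (by fun_prop)), integral_const_mul]

theorem modica_reparametrization_general
    (N M : ℕ)
    (W : Dom N → Tgt M → ℝ)
    (hWc : Continuous fun t : Dom N × Tgt M => W t.1 t.2)
    (hW0 : ∀ x p, 0 ≤ W x p)
    (lam ε : ℝ) (hlam : 0 < lam) (hε : 0 < ε)
    (x : Dom N) (p : Tgt M)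
    (γ : ℝ → Tgt M) (hγ : ContDiff ℝ 1 γ)
    (hγ' : ∀ s ∈ Set.Ioo (-1 : ℝ) 1, deriv γ s ≠ 0) :
    ∃ (τ : ℝ) (g : ℝ → ℝ), 0 < τ ∧
      τ ≤ ε / Real.sqrt lam * ∫ s in Set.Ioo (-1 : ℝ) 1, ‖deriv γ s‖ ∧
      g 0 = -1 ∧ g τ = 1 ∧
      (∀ t ∈ Set.Icc (0 : ℝ) τ, g t ∈ Set.Icc (-1 : ℝ) 1) ∧
      ContinuousOn g (Set.Icc 0 τ) ∧
      (∀ t ∈ Set.Ioo (0 : ℝ) τ, DifferentiableAt ℝ g t ∧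
        (deriv g t) ^ 2 = (lam + W x (γ (g t))) / (ε ^ 2 * ‖deriv γ (g t)‖ ^ 2)) ∧
      (∫ t in Set.Ioo (0 : ℝ) τ,
          (ε⁻¹ * W x (γ (g t)) + ε * ‖deriv γ (g t)‖ ^ 2 * (deriv g t) ^ 2)) ≤
        (∫ s in Set.Ioo (-1 : ℝ) 1, 2 * Real.sqrt (W x (γ s)) * ‖deriv γ s‖) +
          2 * Real.sqrt lam * ∫ s in Set.Ioo (-1 : ℝ) 1, ‖deriv γ s‖ :=
  exists_modica_reparametrization (c := fun s => ‖deriv γ s‖) (V := fun s => W x (γ s))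
    (by norm_num) (hγ.continuous_deriv le_rfl).norm (fun s hs => norm_pos_iff.2 (hγ' s hs))
    (hWc.comp (continuous_const.prodMk hγ.continuous)) (fun s => hW0 x (γ s)) hlam hε

/-- **Lemma 6.3 (Modica's reparametrization).** -/
theorem modica_reparametrization
    (N M : ℕ) (Ω : Set (Dom N)) (hΩopen : IsOpen Ω) (hΩbdd : Bornology.IsBounded Ω)
    (W : Dom N → Tgt M → ℝ)
    (hWc : Continuous fun t : Dom N × Tgt M => W t.1 t.2)
    (hW0 : ∀ x p, 0 ≤ W x p)
    (lam ε : ℝ) (hlam : 0 < lam) (hε : 0 < ε)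
    (x : Dom N) (hx : x ∈ Ω) (p q : Tgt M)
    (γ : ℝ → Tgt M) (hγ : ContDiff ℝ 1 γ)
    (hγp : γ (-1) = p) (hγq : γ 1 = q)
    (hγ' : ∀ s ∈ Set.Ioo (-1 : ℝ) 1, deriv γ s ≠ 0) :
    ∃ (τ : ℝ) (g : ℝ → ℝ), 0 < τ ∧
      τ ≤ ε / Real.sqrt lam * ∫ s in Set.Ioo (-1 : ℝ) 1, ‖deriv γ s‖ ∧
      g 0 = -1 ∧ g τ = 1 ∧
      (∀ t ∈ Set.Icc (0 : ℝ) τ, g t ∈ Set.Icc (-1 : ℝ) 1) ∧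
      ContinuousOn g (Set.Icc 0 τ) ∧
      (∀ t ∈ Set.Ioo (0 : ℝ) τ, DifferentiableAt ℝ g t ∧
        (deriv g t) ^ 2 = (lam + W x (γ (g t))) / (ε ^ 2 * ‖deriv γ (g t)‖ ^ 2)) ∧
      (∫ t in Set.Ioo (0 : ℝ) τ,
          (ε⁻¹ * W x (γ (g t)) + ε * ‖deriv γ (g t)‖ ^ 2 * (deriv g t) ^ 2)) ≤
        (∫ s in Set.Ioo (-1 : ℝ) 1, 2 * Real.sqrt (W x (γ s)) * ‖deriv γ s‖) +
          2 * Real.sqrt lam * ∫ s in Set.Ioo (-1 : ℝ) 1, ‖deriv γ s‖ :=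
  modica_reparametrization_general N M W hWc hW0 lam ε hlam hε x p γ hγ hγ'
end
end

section
/- Let W satisfy (H1)–(H3) and (H4′), let 𝓡 ⊂ Ω be convex compact with 𝒩_{δ/2}(z_i(𝓡)) ∩ 𝒩_{δ/2}(z_j(𝓡)) = ∅ for i ≠ j, let F(z) := min{2√(W(x,z)) : x ∈ 𝓡}, and let σ := (1/2)·min{r, δ, (min_i α_i / max_i α_i)·δ, √(η / max_i α_i)}. Then for every i ∈ {1,…,k} and every z ∈ ℝ^M with dist(z, z_i(𝓡)) ≤ σ one has F(z) = 2√(α_i)·dist(z, z_i(𝓡)). -/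
open MeasureTheory Set Filter Topology Metric
open scoped ENNReal NNReal RealInnerProductSpace ContDiff MeasureTheory

noncomputable section

/-! Within distance `σ` of `z_i(𝓡)`, (H3) gives `W(x,p) = α_i |p - z_i(x)|²` whenever `z_i(x)` is
close to `p`, and such `x` bring `2√(W(x,p))` arbitrarily close to `2√α_i dist(p, z_i(𝓡))`.
No other `x ∈ 𝓡` does better: either `p` is `r/2`-far from every well and `W(x,p) ≥ η`, or `p` is
near some well `z_j(x)` with `j ≠ i`, which by the separation of the `δ/2`-neighbourhoods is more
than `δ/2` away, so `W(x,p) ≥ (min α) (δ/2)²`. The choice of `σ` makes both bounds exceed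
`(max α) σ² ≥ α_i dist(p, z_i(𝓡))²`. -/

namespace ModicaMortola

section SigmaConst

variable {k : ℕ} (r δ η : ℝ) (α : Fin k → ℝ)

theorem two_mul_sigmaConst : 2 * sigmaConst r δ η α =
    min (min r δ) (min ((⨅ i, α i) / (⨆ i, α i) * δ) (Real.sqrt (η / ⨆ i, α i))) := by
  rw [sigmaConst]
  ring

theorem sigmaConst_le_half_left : sigmaConst r δ η α ≤ r / 2 := by
  have := (two_mul_sigmaConst r δ η α).le.trans ((min_le_left _ _).trans (min_le_left _ _))
  linarith

theorem sigmaConst_le_half_delta : sigmaConst r δ η α ≤ δ / 2 := by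
  have := (two_mul_sigmaConst r δ η α).le.trans ((min_le_left _ _).trans (min_le_right _ _))
  linarith

theorem iSup_mul_sigmaConst_le (hb : 0 < ⨆ i, α i) :
    (⨆ i, α i) * sigmaConst r δ η α ≤ (⨅ i, α i) * (δ / 2) := by
  have h := (two_mul_sigmaConst r δ η α).le.trans ((min_le_right _ _).trans (min_le_left _ _))
  rw [div_mul_eq_mul_div, le_div_iff₀ hb] at h
  linarith

theorem iSup_mul_sq_sigmaConst_le_iInf (hb : 0 < ⨆ i, α i) (hσ : 0 ≤ sigmaConst r δ η α) :
    (⨆ i, α i) * sigmaConst r δ η α ^ 2 ≤ (⨅ i, α i) * (δ / 2) ^ 2 := by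
  have h := iSup_mul_sigmaConst_le r δ η α hb
  have hδ := sigmaConst_le_half_delta r δ η α
  calc (⨆ i, α i) * sigmaConst r δ η α ^ 2
      = (⨆ i, α i) * sigmaConst r δ η α * sigmaConst r δ η α := by ring
    _ ≤ (⨅ i, α i) * (δ / 2) * (δ / 2) :=
        mul_le_mul h hδ hσ ((mul_nonneg hb.le hσ).trans h)
    _ = (⨅ i, α i) * (δ / 2) ^ 2 := by ring

theorem iSup_mul_sq_sigmaConst_le_eta (hb : 0 < ⨆ i, α i) (hη : 0 ≤ η)
    (hσ : 0 ≤ sigmaConst r δ η α) : (⨆ i, α i) * sigmaConst r δ η α ^ 2 ≤ η := by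
  have hsq : sigmaConst r δ η α ^ 2 ≤ η / (⨆ i, α i) / 4 := by
    have hle : sigmaConst r δ η α ≤ Real.sqrt (η / ⨆ i, α i) / 2 := by
      have := (two_mul_sigmaConst r δ η α).le.trans ((min_le_right _ _).trans (min_le_right _ _))
      linarith
    calc sigmaConst r δ η α ^ 2 ≤ (Real.sqrt (η / ⨆ i, α i) / 2) ^ 2 := by gcongr
      _ = η / (⨆ i, α i) / 4 := by rw [div_pow, Real.sq_sqrt (div_nonneg hη hb.le)]; norm_num
  calc (⨆ i, α i) * sigmaConst r δ η α ^ 2 ≤ (⨆ i, α i) * (η / (⨆ i, α i) / 4) := by gcongr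
    _ = η / 4 := by field_simp
    _ ≤ η := by linarith

end SigmaConst

theorem lt_dist_of_disjoint_cthickening {X : Type*} [PseudoMetricSpace X] {s t : Set X}
    {x y : X} {ρ : ℝ} (hst : Disjoint (cthickening ρ s) (cthickening ρ t)) (hs : s.Nonempty)
    (hx : infDist x s ≤ ρ) (hy : y ∈ t) : ρ < dist x y := by
  have hxs : x ∈ cthickening ρ s := by
    rw [mem_cthickening_iff, ← ENNReal.ofReal_toReal (infEDist_ne_top hs)]
    exact ENNReal.ofReal_le_ofReal hx
  by_contra! hxy
  exact hst.ne_of_mem hxs (mem_cthickening_of_dist_le x y ρ t hy hxy) rfl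

section Potential

variable {N M k : ℕ} {Ω : Set (Dom N)} {W : Dom N → Tgt M → ℝ} {z : Fin k → Dom N → Tgt M}
  {r η : ℝ} {α : Fin k → ℝ}

theorem eta_le_or_exists_eq_quadratic (h3 : HypH3 Ω W z r α) (h4' : HypH4' Ω W z r η)
    {x : Dom N} (hx : x ∈ Ω) (p : Tgt M) :
    η ≤ W x p ∨ ∃ j, W x p = α j * ‖p - z j x‖ ^ 2 := by
  by_cases hfar : ∀ j, r / 2 ≤ ‖p - z j x‖
  · exact .inl (h4'.2 x hx p hfar)
  · push Not at hfar
    obtain ⟨j, hj⟩ := hfar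
    exact .inr ⟨j, h3.2.2 x hx j p (hj.trans (half_lt_self h3.1))⟩

theorem mul_sq_infDist_le_potential {δ : ℝ} {𝓡 : Set (Dom N)} (h3 : HypH3 Ω W z r α)
    (h4' : HypH4' Ω W z r η) (h𝓡sub : 𝓡 ⊆ Ω)
    (hsep : ∀ i j : Fin k, i ≠ j →
      Disjoint (cthickening (δ / 2) (z i '' 𝓡)) (cthickening (δ / 2) (z j '' 𝓡)))
    {i : Fin k} {p : Tgt M} (hpσ : infDist p (z i '' 𝓡) ≤ sigmaConst r δ η α)
    {x : Dom N} (hx : x ∈ 𝓡) : α i * infDist p (z i '' 𝓡) ^ 2 ≤ W x p := by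
  have hα := h3.2.1
  have hd := infDist_nonneg (x := p) (s := z i '' 𝓡)
  have hσ := hd.trans hpσ
  have hb : 0 < ⨆ j, α j := (hα i).trans_le (le_ciSup (finite_range α).bddAbove i)
  have hdσ : α i * infDist p (z i '' 𝓡) ^ 2 ≤ (⨆ j, α j) * sigmaConst r δ η α ^ 2 := by
    gcongr
    exact le_ciSup (finite_range α).bddAbove i
  rcases eta_le_or_exists_eq_quadratic h3 h4' (h𝓡sub hx) p with hη | ⟨j, hWj⟩
  · exact hdσ.trans ((iSup_mul_sq_sigmaConst_le_eta r δ η α hb h4'.1.le hσ).trans hη)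
  rw [hWj]
  rcases eq_or_ne j i with rfl | hji
  · have := (hα j).le
    gcongr
    exact (infDist_le_dist_of_mem (mem_image_of_mem _ hx)).trans_eq (dist_eq_norm _ _)
  · have hδ := sigmaConst_le_half_delta r δ η α
    have hfar : δ / 2 < ‖p - z j x‖ := by
      rw [← dist_eq_norm]
      exact lt_dist_of_disjoint_cthickening (hsep i j hji.symm) ⟨_, mem_image_of_mem _ hx⟩
        (hpσ.trans hδ) (mem_image_of_mem _ hx)
    calc α i * infDist p (z i '' 𝓡) ^ 2 ≤ (⨆ j, α j) * sigmaConst r δ η α ^ 2 := hdσ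
      _ ≤ (⨅ j, α j) * (δ / 2) ^ 2 := iSup_mul_sq_sigmaConst_le_iInf r δ η α hb hσ
      _ ≤ α j * ‖p - z j x‖ ^ 2 :=
        mul_le_mul (ciInf_le (finite_range α).bddBelow j)
          (pow_le_pow_left₀ (hσ.trans hδ) hfar.le 2) (sq_nonneg _) (hα j).le

end Potential

section ConfFactor

variable {N M : ℕ} {W : Dom N → Tgt M → ℝ} {𝓡 : Set (Dom N)} {p : Tgt M}

theorem confFactor_le {x : Dom N} (hx : x ∈ 𝓡) : confFactor W 𝓡 p ≤ 2 * Real.sqrt (W x p) :=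
  csInf_le ⟨0, by rintro _ ⟨y, -, rfl⟩; positivity⟩ (mem_image_of_mem _ hx)

theorem le_confFactor {c : ℝ} (hne : 𝓡.Nonempty) (h : ∀ x ∈ 𝓡, c ≤ 2 * Real.sqrt (W x p)) :
    c ≤ confFactor W 𝓡 p :=
  le_csInf (hne.image _) (by rintro _ ⟨x, hx, rfl⟩; exact h x hx)

theorem confFactor_le_mul_infDist {z : Dom N → Tgt M} {a r : ℝ} (hne : 𝓡.Nonempty)
    (hr : infDist p (z '' 𝓡) < r)
    (hW : ∀ x ∈ 𝓡, ‖p - z x‖ < r → W x p = a * ‖p - z x‖ ^ 2) :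
    confFactor W 𝓡 p ≤ 2 * Real.sqrt a * infDist p (z '' 𝓡) := by
  -- `infDist` need not be attained, so bound by every `t ∈ (infDist, r)` and let `t` decrease.
  have hnear : ∀ t ∈ Ioo (infDist p (z '' 𝓡)) r, confFactor W 𝓡 p ≤ 2 * Real.sqrt a * t := by
    rintro t ⟨hdt, htr⟩
    obtain ⟨_, ⟨x, hx, rfl⟩, hxt⟩ := (infDist_lt_iff (hne.image z)).1 hdt
    rw [dist_eq_norm] at hxt
    calc confFactor W 𝓡 p ≤ 2 * Real.sqrt (W x p) := confFactor_le hx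
      _ = 2 * Real.sqrt a * ‖p - z x‖ := by
        rw [hW x hx (hxt.trans htr), Real.sqrt_mul' _ (sq_nonneg _), Real.sqrt_sq (norm_nonneg _),
          mul_assoc]
      _ ≤ 2 * Real.sqrt a * t := by gcongr
  have hlim : Tendsto (fun t => 2 * Real.sqrt a * t) (𝓝[>] (infDist p (z '' 𝓡)))
      (𝓝 (2 * Real.sqrt a * infDist p (z '' 𝓡))) :=
    (continuous_const.mul continuous_id).continuousWithinAt.tendsto
  exact ge_of_tendsto hlim (eventually_of_mem (Ioo_mem_nhdsGT hr) hnear)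

end ConfFactor

end ModicaMortola

open ModicaMortola

theorem confFactor_eq_dist_near_wells_general
    (N M k : ℕ)
    (Ω : Set (Dom N))
    (W : Dom N → Tgt M → ℝ) (z : Fin k → Dom N → Tgt M)
    (δ r η : ℝ) (α : Fin k → ℝ)
    (h3 : HypH3 Ω W z r α)
    (h4' : HypH4' Ω W z r η)
    (𝓡 : Set (Dom N)) (h𝓡sub : 𝓡 ⊆ Ω)
    (hsep : ∀ i j : Fin k, i ≠ j →
      Disjoint (cthickening (δ / 2) (z i '' 𝓡)) (cthickening (δ / 2) (z j '' 𝓡))) :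
    ∀ (i : Fin k) (p : Tgt M), infDist p (z i '' 𝓡) ≤ sigmaConst r δ η α →
      confFactor W 𝓡 p = 2 * Real.sqrt (α i) * infDist p (z i '' 𝓡) := by
  intro i p hpσ
  rcases 𝓡.eq_empty_or_nonempty with rfl | hne
  · simp [confFactor]
  have hr : infDist p (z i '' 𝓡) < r :=
    hpσ.trans_lt ((sigmaConst_le_half_left r δ η α).trans_lt (half_lt_self h3.1))
  refine le_antisymm
    (confFactor_le_mul_infDist hne hr fun x hx => h3.2.2 x (h𝓡sub hx) i p)
    (le_confFactor hne fun x hx => ?_)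
  calc 2 * Real.sqrt (α i) * infDist p (z i '' 𝓡)
      = 2 * Real.sqrt (α i * infDist p (z i '' 𝓡) ^ 2) := by
        rw [Real.sqrt_mul' _ (sq_nonneg _), Real.sqrt_sq infDist_nonneg, mul_assoc]
    _ ≤ 2 * Real.sqrt (W x p) := by
        gcongr
        exact mul_sq_infDist_le_potential h3 h4' h𝓡sub hsep hpσ hx

/-- **Step 1 of Proposition 3.2.** Near the well image `z_i(𝓡)`, the conformal factor
`F(z) = min_{x∈𝓡} 2√(W(x,z))` coincides with `2√(α_i) dist(z, z_i(𝓡))`. -/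
theorem confFactor_eq_dist_near_wells
    (N M k : ℕ) [NeZero k] (hN : 2 ≤ N)
    (Ω : Set (Dom N)) (hΩopen : IsOpen Ω) (hΩbdd : Bornology.IsBounded Ω)
    (hΩlip : HasLipschitzBoundary Ω)
    (W : Dom N → Tgt M → ℝ) (z : Fin k → Dom N → Tgt M)
    (δ r η : ℝ) (α : Fin k → ℝ)
    (h1 : HypH1 Ω W z) (h2 : HypH2 Ω z δ) (h3 : HypH3 Ω W z r α)
    (h4' : HypH4' Ω W z r η)
    (𝓡 : Set (Dom N)) (h𝓡c : IsCompact 𝓡) (h𝓡conv : Convex ℝ 𝓡) (h𝓡sub : 𝓡 ⊆ Ω)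
    (hsep : ∀ i j : Fin k, i ≠ j →
      Disjoint (cthickening (δ / 2) (z i '' 𝓡)) (cthickening (δ / 2) (z j '' 𝓡))) :
    ∀ (i : Fin k) (p : Tgt M), infDist p (z i '' 𝓡) ≤ sigmaConst r δ η α →
      confFactor W 𝓡 p = 2 * Real.sqrt (α i) * infDist p (z i '' 𝓡) :=
  confFactor_eq_dist_near_wells_general N M k Ω W z δ r η α h3 h4' 𝓡 h𝓡sub hsep
end
end
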